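/- Consider the argumentation framework with arguments {a, b, b', c, c'} and defeats b→a, c→a, b→b', b'→b, c→c', c'→c. For any number of agents n divisible by 3, there exists no aggregation operator F satisfying No-Tie Universal Domain, Weak Systematicity, Anonymity, Collective Rationality, and Supportiveness. -/

import Mathlib

inductive Label : Type
  | inn | out | undec
  deriving DecidableEq

def Complete {A : Type} (att : A → A → Prop) (L : A → Label) : Prop :=
  (∀ a, L a = Label.inn → ∀ b, att b a → L b = Label.out) ∧
  (∀ a, L a = Label.out → ∃ b, att b a ∧ L b = Label.inn) ∧
  (∀ a, L a = Label.undec →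
    (∃ b, att b a ∧ L b = Label.undec) ∧ ¬ ∃ b, att b a ∧ L b = Label.inn)

/-- Number of agents labelling argument `a` with label `l` in profile `P`. -/
def count {A : Type} {n : ℕ} (P : Fin n → A → Label) (a : A) (l : Label) : ℕ :=
  (Finset.univ.filter fun i => P i a = l).card

/-- `l` is the strict plurality winner for argument `a` in profile `P`. -/
def IsPlu {A : Type} {n : ℕ} (P : Fin n → A → Label) (a : A) (l : Label) : Prop :=
  ∀ l', l' ≠ l → count P a l' < count P a l

/-- The argument-wise plurality rule is defined on `P` (no ties). -/
def PluDefined {A : Type} {n : ℕ} (P : Fin n → A → Label) : Prop :=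
  ∀ a, ∃ l, IsPlu P a l

def InSync {A : Type} (att : A → A → Prop) (a b : A) : Prop :=
  (∀ L, Complete att L → L a = L b) ∨
  (∀ L, Complete att L →
    ((L a = Label.inn ↔ L b = Label.out) ∧ (L a = Label.out ↔ L b = Label.inn)))

inductive Arg : Type
  | a | b | b' | c | c'
  deriving DecidableEq

instance : Fintype Arg :=
  ⟨⟨{Arg.a, Arg.b, Arg.b', Arg.c, Arg.c'}, by decide⟩, by intro x; cases x <;> decide⟩

/-- Defeats: b→a, c→a, b→b', b'→b, c→c', c'→c. -/
def att8 : Arg → Arg → Prop := fun x y =>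
  (x = Arg.b ∧ y = Arg.a) ∨ (x = Arg.c ∧ y = Arg.a) ∨
  (x = Arg.b ∧ y = Arg.b') ∨ (x = Arg.b' ∧ y = Arg.b) ∨
  (x = Arg.c ∧ y = Arg.c') ∨ (x = Arg.c' ∧ y = Arg.c)

/-- The profile of complete labellings causes no ties. -/
def NoTie {n : ℕ} (P : Fin n → {L : Arg → Label // Complete att8 L}) : Prop :=
  PluDefined (fun i => (P i).1)


/-
Split the `3m` agents into three equal blocks voting `L1`, `L2`, `L3`. The plurality is defined on
every argument, and the columns of `a`, `b`, `c` in this profile are cyclic shifts of one another: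
a relabelling of the agents turns the votes on `b` (or `c`) into the votes on `a`. Anonymity and
weak systematicity therefore force `a`, `b`, `c` to receive the same collective label, and
supportiveness rules out `undec` for `a`. But in a complete labelling an `in` argument has its
attacker `b` out, and an `out` argument has an attacker `b` or `c` in.
-/

open Equiv

instance : Fintype Label :=
  ⟨⟨{.inn, .out, .undec}, by decide⟩, by intro x; cases x <;> decide⟩

instance : DecidableRel att8 := fun x y => by unfold att8; infer_instance

section Plurality

variable {A : Type} {n : ℕ}

lemma count_comp_perm (P : Fin n → A → Label) (ρ : Perm (Fin n)) (x : A) (l : Label) :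
    count (P ∘ ρ) x l = count P x l :=
  Finset.card_equiv ρ (by simp)

lemma IsPlu.comp_perm {P : Fin n → A → Label} {x : A} {l : Label} (h : IsPlu P x l)
    (ρ : Perm (Fin n)) : IsPlu (P ∘ ρ) x l := by
  simpa only [IsPlu, count_comp_perm] using h

lemma NoTie.comp_perm {P : Fin n → {L : Arg → Label // Complete att8 L}} (h : NoTie P)
    (ρ : Perm (Fin n)) : NoTie (P ∘ ρ) :=
  fun x => (h x).imp fun _ hl => hl.comp_perm ρ

end Plurality

section BlockProfile

variable {X : Type} {k : ℕ}

def blockProfile (G : Fin k → X) (m : ℕ) : Fin (k * m) → X :=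
  fun i => G (finProdFinEquiv.symm i).1

def blockPerm (σ : Perm (Fin k)) (m : ℕ) : Perm (Fin (k * m)) :=
  finProdFinEquiv.permCongr (σ.prodCongr (Equiv.refl _))

lemma blockProfile_comp_blockPerm (G : Fin k → X) (σ : Perm (Fin k)) (m : ℕ) :
    blockProfile G m ∘ blockPerm σ m = blockProfile (G ∘ σ) m := by
  ext i
  simp [blockProfile, blockPerm, Equiv.permCongr_apply]

lemma count_blockProfile {A : Type} (G : Fin k → A → Label) (m : ℕ) (x : A) (l : Label) :
    count (blockProfile G m) x l = count G x l * m :=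
  calc count (blockProfile G m) x l
      = ((Finset.univ.filter fun j => G j x = l) ×ˢ (Finset.univ : Finset (Fin m))).card :=
        Finset.card_equiv finProdFinEquiv.symm (by simp [blockProfile])
    _ = count G x l * m := by simp [count, Finset.card_product]

lemma pluDefined_blockProfile {A : Type} {G : Fin k → A → Label} {m : ℕ} (hm : 0 < m) :
    PluDefined (blockProfile G m) ↔ PluDefined G := by
  simp only [PluDefined, IsPlu, count_blockProfile, Nat.mul_lt_mul_right hm]

end BlockProfile

abbrev Profile (n : ℕ) := Fin n → {L : Arg → Label // Complete att8 L}

def WeaklySystematic {n : ℕ} (F : Profile n → Arg → Label) : Prop :=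
  ∀ P P' : Profile n, NoTie P → NoTie P' → ∀ x y : Arg,
    (∀ i, (P i).1 x = (P' i).1 y) → F P x = F P' y

def Anonymous {n : ℕ} (F : Profile n → Arg → Label) : Prop :=
  ∀ (P : Profile n) (ρ : Perm (Fin n)), NoTie P → NoTie (P ∘ ρ) → F (P ∘ ρ) = F P

lemma apply_eq_of_comp_perm {n : ℕ} {F : Profile n → Arg → Label} (hsys : WeaklySystematic F)
    (hanon : Anonymous F) {P : Profile n} (hP : NoTie P) (ρ : Perm (Fin n)) {x y : Arg}
    (hxy : ∀ i, (P (ρ i)).1 x = (P i).1 y) : F P x = F P y := by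
  rw [← hsys _ _ (hP.comp_perm ρ) hP x y hxy, hanon P ρ hP (hP.comp_perm ρ)]

lemma apply_blockProfile_eq {k m : ℕ} {F : Profile (k * m) → Arg → Label}
    (hsys : WeaklySystematic F) (hanon : Anonymous F)
    {G : Fin k → {L : Arg → Label // Complete att8 L}} (hG : NoTie (blockProfile G m))
    (σ : Perm (Fin k)) {x y : Arg} (hxy : ∀ j, (G (σ j)).1 x = (G j).1 y) :
    F (blockProfile G m) x = F (blockProfile G m) y :=
  apply_eq_of_comp_perm hsys hanon hG (blockPerm σ m) fun i => by
    rw [← Function.comp_apply (f := blockProfile G m), blockProfile_comp_blockPerm]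
    exact hxy _

lemma Complete.eq_undec_of_eq_attackers {L : Arg → Label} (hL : Complete att8 L)
    (hb : L .b = L .a) (hc : L .c = L .a) : L .a = .undec := by
  obtain ⟨hin, hout, -⟩ := hL
  cases ha : L .a
  · have := hin .a ha .b (by simp [att8])
    rw [hb, ha] at this
    cases this
  · obtain ⟨z, hz, hzin⟩ := hout .a ha
    rcases hz with ⟨rfl, -⟩ | ⟨rfl, -⟩ | ⟨-, h⟩ | ⟨-, h⟩ | ⟨-, h⟩ | ⟨-, h⟩ <;>
      simp_all
  · rfl

def lab₁ : Arg → Label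
  | .b | .c' => .inn
  | _ => .out

def lab₂ : Arg → Label
  | .b' | .c => .inn
  | _ => .out

def lab₃ : Arg → Label
  | .a | .b' | .c' => .inn
  | _ => .out

def cyclicTriple : Fin 3 → {L : Arg → Label // Complete att8 L} :=
  ![⟨lab₁, by unfold Complete; decide⟩, ⟨lab₂, by unfold Complete; decide⟩,
    ⟨lab₃, by unfold Complete; decide⟩]

lemma noTie_blockProfile_cyclicTriple {m : ℕ} (hm : 0 < m) :
    NoTie (blockProfile cyclicTriple m) :=
  (pluDefined_blockProfile (G := fun j => (cyclicTriple j).1) hm).2 <| by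
    unfold PluDefined IsPlu count; decide

/-- for this framework and any n divisible by 3, no aggregation operator
satisfies No-Tie Universal Domain, Weak Systematicity, Anonymity, Collective
Rationality, and Supportiveness. -/
theorem stmt8 {n : ℕ} (hn : 3 ∣ n) (hn0 : 0 < n) :
    ¬ ∃ F : (Fin n → {L : Arg → Label // Complete att8 L}) → Arg → Label,
      -- Weak Systematicity (on the no-tie domain)
      (∀ (P P' : Fin n → {L : Arg → Label // Complete att8 L}),
        NoTie P → NoTie P' → ∀ (x y : Arg),
        (∀ i, (P i).1 x = (P' i).1 y) → F P x = F P' y) ∧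
      -- Anonymity (on the no-tie domain)
      (∀ (P : Fin n → {L : Arg → Label // Complete att8 L}) (ρ : Equiv.Perm (Fin n)),
        NoTie P → NoTie (fun i => P (ρ i)) → F (fun i => P (ρ i)) = F P) ∧
      -- Collective Rationality (on the no-tie domain)
      (∀ P : Fin n → {L : Arg → Label // Complete att8 L},
        NoTie P → Complete att8 (F P)) ∧
      -- Supportiveness (on the no-tie domain)
      (∀ P : Fin n → {L : Arg → Label // Complete att8 L},
        NoTie P → ∀ x : Arg, ∃ i, F P x = (P i).1 x) := by
  obtain ⟨m, rfl⟩ := hn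
  rintro ⟨F, hsys, hanon, hrat, hsupp⟩
  set P := blockProfile cyclicTriple m
  have hP : NoTie P := noTie_blockProfile_cyclicTriple (by omega)
  have hb : F P .b = F P .a := apply_blockProfile_eq hsys hanon hP (finRotate 3) (by decide)
  have hc : F P .c = F P .a :=
    apply_blockProfile_eq hsys hanon hP (finRotate 3 * finRotate 3) (by decide)
  have hundec : F P .a = .undec := (hrat P hP).eq_undec_of_eq_attackers hb hc
  have hvotes : ∀ j, (cyclicTriple j).1 .a ≠ .undec := by decide
  obtain ⟨i, hi⟩ := hsupp P hP .a
  exact hvotes _ (hi ▸ hundec)
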